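/- The insertion bijection preserves path weights: if π is an irregular chain and ℘(π) is obtained by inserting B = A ∪ {b} with b = mM(C\A) between consecutive sets A ⊊ C of π, then the total weight satisfies α(℘(π)) = α(π). Equivalently, 2ℓ({b} ∩ J', C\B) − 2ℓ(C\B, {b} ∩ J'') = 0 for b = mM(C\A). -/

import Mathlib

/-- `mM K` is `min (K ∩ J')` if `K ∩ J'` is nonempty, and `max (K ∩ J'')` otherwise
(with junk value `0` when both are empty). -/
def mM (J' J'' K : Finset ℕ) : ℕ :=
  (K ∩ J').min.untopD ((K ∩ J'').max.unbotD 0)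

/-- The augmented entry `A_k` of the chain `L = (A_1, …, A_p)`: `A_0 = ∅`,
`A_k = L[k-1]` for `1 ≤ k ≤ p`, and `A_k = J` for `k > p`. -/
def elt (J : Finset ℕ) (L : List (Finset ℕ)) (k : ℕ) : Finset ℕ :=
  if k = 0 then ∅ else L.getD (k - 1) J

/-- `L` is regular at position `i₀` (`1 ≤ i₀ ≤ p`, with `A_0 = ∅`, `A_{p+1} = J`):
`|A_i| = i` for all `i ≤ i₀` and `A_{i₀} \ A_{i₀−1} = {mM(A_{i₀+1} \ A_{i₀−1})}`. -/
def RegularAt (J' J'' : Finset ℕ) (L : List (Finset ℕ)) (i₀ : ℕ) : Prop :=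
  1 ≤ i₀ ∧ i₀ ≤ L.length ∧
  (∀ i, 1 ≤ i → i ≤ i₀ → (elt (J' ∪ J'') L i).card = i) ∧
  elt (J' ∪ J'') L i₀ \ elt (J' ∪ J'') L (i₀ - 1)
    = {mM J' J'' (elt (J' ∪ J'') L (i₀ + 1) \ elt (J' ∪ J'') L (i₀ - 1))}

/-- A chain is irregular if it is regular at no position. -/
def Irregular (J' J'' : Finset ℕ) (L : List (Finset ℕ)) : Prop :=
  ∀ i₀, ¬ RegularAt J' J'' L i₀

/-- `𝔓₀`: nonempty strict chains `∅ ⊊ A_1 ⊊ ⋯ ⊊ A_p ⊊ J`. -/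
def P0 (J : Finset ℕ) : Set (List (Finset ℕ)) :=
  {L | L ≠ [] ∧ L.Chain' (· ⊂ ·) ∧ ∀ A ∈ L, ∅ ⊂ A ∧ A ⊂ J}

/-- The elements of `J''` in increasing order followed by those of `J'` in
decreasing order. -/
def sortedJ (J' J'' : Finset ℕ) : List ℕ :=
  J''.sort (· ≤ ·) ++ (J'.sort (· ≤ ·)).reverse

/-- The chain of initial segments `(A_1, …, A_m)` of a list `s`,
`A_k = {s_1, …, s_k}`. -/
def chainOf (s : List ℕ) (m : ℕ) : List (Finset ℕ) :=
  (List.range m).map (fun k => (s.take (k + 1)).toFinset)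

/-- The maximal chain `1̂`, adding the elements of `J''` in increasing order and
then those of `J'` in decreasing order, ending at `J`. -/
def oneHat (J' J'' : Finset ℕ) : List (Finset ℕ) :=
  chainOf (sortedJ J' J'') (sortedJ J' J'').length

/-- The chain `π^{1̂}`: same as `1̂` but stopping just before `J`. -/
def piOneHat (J' J'' : Finset ℕ) : List (Finset ℕ) :=
  chainOf (sortedJ J' J'') ((sortedJ J' J'').length - 1)

/-- The path `0̂ = (∅)`. -/
def zeroHat : List (Finset ℕ) := [∅]

/-- `𝔓 = 𝔓₀ ∪ {0̂, 1̂}`. -/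
def PP (J' J'' : Finset ℕ) : Set (List (Finset ℕ)) :=
  P0 (J' ∪ J'') ∪ {zeroHat, oneHat J' J''}

/-- The first gap position `i₀`: the length of the maximal initial segment of the
chain along which the set sizes increase by exactly one. -/
def gapIdx (L : List (Finset ℕ)) : ℕ :=
  ((L.zip (List.range L.length)).takeWhile
    (fun p => decide (p.1.card = p.2 + 1))).length

/-- The insertion map `℘`: inserts `B = A_{i₀} ∪ {mM(A_{i₀+1} \ A_{i₀})}` at the
first gap position; `℘(0̂) = ({min J'})` if `J' ≠ ∅`, else `({max J''})`. -/
def insMap (J' J'' : Finset ℕ) (L : List (Finset ℕ)) : List (Finset ℕ) :=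
  if L = zeroHat then [{mM J' J'' (J' ∪ J'')}]
  else
    L.take (gapIdx L) ++
      (elt (J' ∪ J'') L (gapIdx L) ∪
        {mM J' J'' (elt (J' ∪ J'') L (gapIdx L + 1) \ elt (J' ∪ J'') L (gapIdx L))})
      :: L.drop (gapIdx L)

/-- `linv S T` counts pairs `(s,t) ∈ S × T` with `s > t`. -/
def linv (S T : Finset ℕ) : ℕ := ((S ×ˢ T).filter (fun p => p.2 < p.1)).card

/-- The weight exponent
`E(A,B) = −ℓ(J\B, B\A) − ℓ(B\A, A) + (2|J\B| − |I|)|(B\A) ∩ J'|`. -/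
def wexp (I J' J'' A B : Finset ℕ) : ℤ :=
  -(linv ((J' ∪ J'') \ B) (B \ A) : ℤ) - (linv (B \ A) A : ℤ)
    + (2 * (((J' ∪ J'') \ B).card : ℤ) - (I.card : ℤ)) * (((B \ A) ∩ J').card : ℤ)

/-- The edge weight `α_A^B = (−q)^{E(A,B)}`. -/
noncomputable def alphaWt {k : Type*} [Field k] (q : k) (I J' J'' A B : Finset ℕ) : k :=
  (-q) ^ (wexp I J' J'' A B)

/-- The weight of a chain `(A_1, …, A_p)`: the product
`α_∅^{A_1} α_{A_1}^{A_2} ⋯ α_{A_p}^{J}` of the edge weights of the chain augmented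
by `∅` at the start and `J` at the end. -/
noncomputable def wt {k : Type*} [Field k] (q : k) (I J' J'' : Finset ℕ)
    (L : List (Finset ℕ)) : k :=
  ∏ i ∈ Finset.range (L.length + 1),
    alphaWt q I J' J'' (elt (J' ∪ J'') L i) (elt (J' ∪ J'') L (i + 1))

/-!
Weights are products of edge weights along the augmented chain, so inserting `B = A ∪ {b}`
between consecutive sets `A ⊊ C` multiplies the weight by `α_A^B α_B^C / α_A^C`, which by the
cocycle identity is `(−q)^{2ℓ({b} ∩ J', C\B) − 2ℓ(C\B, {b} ∩ J'')}`.
For `b = mM(C\A)` both counts vanish: if `b ∈ J'` it is the least element of `(C\A) ∩ J'` and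
lies below all of `J''`, so nothing in `C\B` is smaller; if `b ∈ J''` then `C\A ⊆ J''` and `b`
is its largest element. For `π ∈ 𝔓₀` the insertion happens between consecutive sets of the
chain; `0̂` is treated directly, and `1̂` is regular at its last position unless `J = ∅`.
-/

open Finset

section linv

variable {S S₁ S₂ T T₁ T₂ : Finset ℕ}

lemma linv_eq_zero_of_forall_le (h : ∀ s ∈ S, ∀ t ∈ T, s ≤ t) : linv S T = 0 := by
  rw [linv, card_eq_zero, filter_eq_empty_iff]
  rintro ⟨s, t⟩ hst
  rw [mem_product] at hst
  exact not_lt.mpr (h s hst.1 t hst.2)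

lemma linv_union_left (h : Disjoint S₁ S₂) : linv (S₁ ∪ S₂) T = linv S₁ T + linv S₂ T := by
  rw [linv, union_product, filter_union, card_union_of_disjoint]
  · rfl
  exact disjoint_filter_filter (disjoint_product.mpr (Or.inl h))

lemma linv_union_right (h : Disjoint T₁ T₂) : linv S (T₁ ∪ T₂) = linv S T₁ + linv S T₂ := by
  rw [linv, product_union, filter_union, card_union_of_disjoint]
  · rfl
  exact disjoint_filter_filter (disjoint_product.mpr (Or.inr h))

lemma linv_add_linv_swap (h : Disjoint S T) : linv S T + linv T S = #S * #T := by
  have hswap : linv T S = #((S ×ˢ T).filter fun p => ¬ p.2 < p.1) := by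
    refine card_nbij' Prod.swap Prod.swap ?_ ?_ (fun _ _ => rfl) (fun _ _ => rfl)
    · rintro ⟨t, s⟩ hts
      simp only [mem_coe, mem_filter, mem_product] at hts ⊢
      exact ⟨⟨hts.1.2, hts.1.1⟩, not_lt.mpr hts.2.le⟩
    · rintro ⟨s, t⟩ hst
      simp only [mem_coe, mem_filter, mem_product] at hst ⊢
      refine ⟨⟨hst.1.2, hst.1.1⟩, (not_lt.mp hst.2).lt_of_ne ?_⟩
      rintro rfl
      exact disjoint_left.mp h hst.1.1 hst.1.2
  rw [linv, hswap, card_filter_add_card_filter_not, card_product]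

end linv

section mM

variable {J' J'' K T : Finset ℕ}

lemma mM_of_inter_nonempty (h : (K ∩ J').Nonempty) : mM J' J'' K = (K ∩ J').min' h := by
  rw [mM, ← coe_min' h]
  rfl

lemma mM_of_inter_eq_empty (h : K ∩ J' = ∅) (h' : (K ∩ J'').Nonempty) :
    mM J' J'' K = (K ∩ J'').max' h' := by
  rw [mM, h, ← coe_max' h']
  rfl

lemma mM_mem (hne : K.Nonempty) (hK : K ⊆ J' ∪ J'') : mM J' J'' K ∈ K := by
  rcases (K ∩ J').eq_empty_or_nonempty with h | h
  · have hK'' : K ∩ J'' = K := by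
      refine inter_eq_left.mpr fun x hx => (mem_union.mp (hK hx)).resolve_left fun hx' => ?_
      simpa [h] using mem_inter.mpr ⟨hx, hx'⟩
    rw [mM_of_inter_eq_empty h (hK''.symm ▸ hne)]
    exact (mem_inter.mp (max'_mem _ _)).1
  · rw [mM_of_inter_nonempty h]
    exact (mem_inter.mp (min'_mem _ _)).1

lemma mM_singleton {x : ℕ} (hx : x ∈ J' ∪ J'') : mM J' J'' {x} = x :=
  mem_singleton.mp (mM_mem (singleton_nonempty x) (singleton_subset_iff.mpr hx))

lemma mM_le_of_mem_left (hlt : ∀ a ∈ J', ∀ b ∈ J'', a < b) (hne : K.Nonempty)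
    (hK : K ⊆ J' ∪ J'') (hJ' : mM J' J'' K ∈ J') {t : ℕ} (ht : t ∈ K) : mM J' J'' K ≤ t := by
  have h : (K ∩ J').Nonempty := ⟨_, mem_inter.mpr ⟨mM_mem hne hK, hJ'⟩⟩
  rw [mM_of_inter_nonempty h] at hJ' ⊢
  rcases mem_union.mp (hK ht) with htJ' | htJ''
  · exact min'_le _ _ (mem_inter.mpr ⟨ht, htJ'⟩)
  · exact (hlt _ hJ' _ htJ'').le

lemma le_mM_of_mem_right (hdisj : Disjoint J' J'')
    (hK : K ⊆ J' ∪ J'') (hJ'' : mM J' J'' K ∈ J'') {t : ℕ} (ht : t ∈ K) : t ≤ mM J' J'' K := by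
  have h : K ∩ J' = ∅ := by
    by_contra h
    rw [mM_of_inter_nonempty (nonempty_iff_ne_empty.mpr h)] at hJ''
    exact disjoint_left.mp hdisj (mem_inter.mp (min'_mem _ _)).2 hJ''
  have htJ'' : t ∈ J'' := (mem_union.mp (hK ht)).resolve_left fun htJ' => by
    simpa [h] using mem_inter.mpr ⟨ht, htJ'⟩
  rw [mM_of_inter_eq_empty h ⟨t, mem_inter.mpr ⟨ht, htJ''⟩⟩]
  exact le_max' _ _ (mem_inter.mpr ⟨ht, htJ''⟩)

lemma linv_mM_inter_left (hlt : ∀ a ∈ J', ∀ b ∈ J'', a < b) (hne : K.Nonempty)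
    (hK : K ⊆ J' ∪ J'') (hT : T ⊆ K) : linv ({mM J' J'' K} ∩ J') T = 0 :=
  linv_eq_zero_of_forall_le fun s hs _ ht => by
    obtain ⟨rfl, hsJ'⟩ : s = mM J' J'' K ∧ s ∈ J' := by simpa using hs
    exact mM_le_of_mem_left hlt hne hK hsJ' (hT ht)

lemma linv_mM_inter_right (hdisj : Disjoint J' J'')
    (hK : K ⊆ J' ∪ J'') (hT : T ⊆ K) : linv T ({mM J' J'' K} ∩ J'') = 0 :=
  linv_eq_zero_of_forall_le fun _ hs t ht => by
    obtain ⟨rfl, htJ''⟩ : t = mM J' J'' K ∧ t ∈ J'' := by simpa using ht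
    exact le_mM_of_mem_right hdisj hK htJ'' (hT hs)

lemma linv_mM_defect_eq_zero {A C : Finset ℕ} (hdisj : Disjoint J' J'')
    (hlt : ∀ a ∈ J', ∀ b ∈ J'', a < b) (hCJ : C ⊆ J' ∪ J'') (hne : (C \ A).Nonempty) :
    2 * (linv ({mM J' J'' (C \ A)} ∩ J') (C \ (A ∪ {mM J' J'' (C \ A)})) : ℤ)
      - 2 * (linv (C \ (A ∪ {mM J' J'' (C \ A)})) ({mM J' J'' (C \ A)} ∩ J'') : ℤ) = 0 := by
  have hK : C \ A ⊆ J' ∪ J'' := sdiff_subset.trans hCJ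
  have hsub : C \ (A ∪ {mM J' J'' (C \ A)}) ⊆ C \ A :=
    sdiff_subset_sdiff subset_rfl subset_union_left
  rw [linv_mM_inter_left hlt hne hK hsub, linv_mM_inter_right hdisj hK hsub]
  simp

end mM

section weight

variable {k : Type*} [Field k] (q : k) (I : Finset ℕ) {J' J'' A B C : Finset ℕ}

lemma wexp_add_wexp (hdisj : Disjoint J' J'') (hAB : A ⊆ B) (hBC : B ⊆ C)
    (hCJ : C ⊆ J' ∪ J'') :
    wexp I J' J'' A B + wexp I J' J'' B C =
      wexp I J' J'' A C + 2 * (linv ((B \ A) ∩ J') (C \ B) : ℤ)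
        - 2 * (linv (C \ B) ((B \ A) ∩ J'') : ℤ) := by
  have hBA_CB : Disjoint (B \ A) (C \ B) := disjoint_of_subset_left sdiff_subset disjoint_sdiff
  have hJC_CB : Disjoint ((J' ∪ J'') \ C) (C \ B) :=
    disjoint_of_subset_right sdiff_subset sdiff_disjoint
  have hJB : (J' ∪ J'') \ C ∪ C \ B = (J' ∪ J'') \ B := sdiff_union_sdiff_cancel hCJ hBC
  have hCA : B \ A ∪ C \ B = C \ A := by rw [union_comm, sdiff_union_sdiff_cancel hBC hAB]
  have hB : A ∪ B \ A = B := union_sdiff_of_subset hAB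
  have hBA : (B \ A) ∩ J' ∪ (B \ A) ∩ J'' = B \ A := by
    rw [← inter_union_distrib_left, inter_eq_left]
    exact sdiff_subset.trans (hBC.trans hCJ)
  have e₁ : linv ((J' ∪ J'') \ B) (B \ A)
      = linv ((J' ∪ J'') \ C) (B \ A) + linv (C \ B) (B \ A) := by
    rw [← hJB, linv_union_left hJC_CB]
  have e₂ : linv (C \ A) A = linv (B \ A) A + linv (C \ B) A := by
    rw [← hCA, linv_union_left hBA_CB]
  have e₃ : linv (C \ B) B = linv (C \ B) A + linv (C \ B) (B \ A) := by
    rw [← linv_union_right disjoint_sdiff, hB]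
  have e₄ : #((J' ∪ J'') \ B) = #((J' ∪ J'') \ C) + #(C \ B) := by
    rw [← hJB, card_union_of_disjoint hJC_CB]
  have e₅ : #((C \ A) ∩ J') = #((B \ A) ∩ J') + #((C \ B) ∩ J') := by
    rw [← hCA, union_inter_distrib_right, card_union_of_disjoint
      (disjoint_of_subset_left inter_subset_left
        (disjoint_of_subset_right inter_subset_left hBA_CB))]
  have e₆ : linv ((J' ∪ J'') \ C) (C \ A)
      = linv ((J' ∪ J'') \ C) (B \ A) + linv ((J' ∪ J'') \ C) (C \ B) := by
    rw [← hCA, linv_union_right hBA_CB]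
  have e₇ : linv (C \ B) (B \ A)
      = linv (C \ B) ((B \ A) ∩ J') + linv (C \ B) ((B \ A) ∩ J'') := by
    rw [← linv_union_right (disjoint_of_subset_left inter_subset_right
      (disjoint_of_subset_right inter_subset_right hdisj)), hBA]
  have hswap : (linv ((B \ A) ∩ J') (C \ B) : ℤ) + linv (C \ B) ((B \ A) ∩ J')
      = #((B \ A) ∩ J') * #(C \ B) :=
    mod_cast linv_add_linv_swap (disjoint_of_subset_left inter_subset_left hBA_CB)
  simp only [wexp]
  rw [e₁, e₂, e₃, e₄, e₅, e₆, e₇]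
  push_cast
  linear_combination (-2 : ℤ) * hswap

lemma alphaWt_mul_alphaWt (hq : q ≠ 0) (hdisj : Disjoint J' J'') (hAB : A ⊆ B) (hBC : B ⊆ C)
    (hCJ : C ⊆ J' ∪ J'') :
    alphaWt q I J' J'' A B * alphaWt q I J' J'' B C =
      (-q) ^ (2 * (linv ((B \ A) ∩ J') (C \ B) : ℤ) - 2 * (linv (C \ B) ((B \ A) ∩ J'') : ℤ))
        * alphaWt q I J' J'' A C := by
  have hq' : -q ≠ 0 := neg_ne_zero.mpr hq
  rw [alphaWt, alphaWt, alphaWt, ← zpow_add₀ hq', ← zpow_add₀ hq',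
    wexp_add_wexp I hdisj hAB hBC hCJ]
  ring_nf

lemma alphaWt_of_subset (h : B ⊆ A) : alphaWt q I J' J'' A B = 1 := by
  simp [alphaWt, wexp, sdiff_eq_empty_iff_subset.mpr h, linv]

lemma alphaWt_insert_mM (hq : q ≠ 0) (hdisj : Disjoint J' J'') (hlt : ∀ a ∈ J', ∀ b ∈ J'', a < b)
    (hAC : A ⊆ C) (hCJ : C ⊆ J' ∪ J'') (hne : (C \ A).Nonempty) :
    alphaWt q I J' J'' A (A ∪ {mM J' J'' (C \ A)})
      * alphaWt q I J' J'' (A ∪ {mM J' J'' (C \ A)}) C = alphaWt q I J' J'' A C := by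
  have hb := mem_sdiff.mp (mM_mem hne (sdiff_subset.trans hCJ))
  rw [alphaWt_mul_alphaWt q I hq hdisj subset_union_left
      (union_subset hAC (singleton_subset_iff.mpr hb.1)) hCJ, union_sdiff_left,
    Finset.sdiff_eq_self_iff_disjoint.mpr (disjoint_singleton_left.mpr hb.2),
    linv_mM_defect_eq_zero hdisj hlt hCJ hne, zpow_zero, one_mul]

end weight

lemma Finset.prod_range_merge_adjacent {M : Type*} [CommMonoid M] {F F' : ℕ → M} {g n : ℕ}
    (hgn : g ≤ n) (hlt : ∀ i < g, F' i = F i) (hg : F' g * F' (g + 1) = F g)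
    (hgt : ∀ i > g, F' (i + 1) = F i) :
    ∏ i ∈ range (n + 2), F' i = ∏ i ∈ range (n + 1), F i := by
  induction n, hgn using Nat.le_induction with
  | base =>
    rw [prod_range_succ, prod_range_succ, mul_assoc, hg, prod_range_succ,
      prod_congr rfl fun i hi => hlt i (mem_range.mp hi)]
  | succ n hgn ih =>
    rw [prod_range_succ, ih, prod_range_succ _ (n + 1), hgt (n + 1) (by omega)]

section chain

variable {J B : Finset ℕ} {L : List (Finset ℕ)} {g : ℕ}

lemma elt_insert_of_le (hg : g ≤ L.length) {i : ℕ} (hi : i ≤ g) :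
    elt J (L.take g ++ B :: L.drop g) i = elt J L i := by
  unfold elt
  split_ifs with h0
  · rfl
  rw [List.getD_append _ _ _ _ (by rw [List.length_take_of_le hg]; omega),
    List.getD_eq_getElem?_getD, List.getD_eq_getElem?_getD, List.getElem?_take_of_lt (by omega)]

lemma elt_insert_succ (hg : g ≤ L.length) : elt J (L.take g ++ B :: L.drop g) (g + 1) = B := by
  simp [elt, List.length_take_of_le hg]

lemma elt_insert_of_gt (hg : g ≤ L.length) {i : ℕ} (hi : g < i) :
    elt J (L.take g ++ B :: L.drop g) (i + 1) = elt J L i := by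
  unfold elt
  rw [if_neg (by omega), if_neg (by omega), List.getD_append_right _ _ _ _ (by simp; omega),
    List.length_take_of_le hg, show i + 1 - 1 - g = (i - 1 - g) + 1 by omega, List.getD_cons_succ,
    List.getD_eq_getElem?_getD, List.getD_eq_getElem?_getD, List.getElem?_drop,
    Nat.add_sub_cancel' (by omega)]

variable {k : Type*} [Field k] (q : k) (I J' J'' : Finset ℕ)

lemma wt_insert (hg : g ≤ L.length)
    (hB : alphaWt q I J' J'' (elt (J' ∪ J'') L g) B
        * alphaWt q I J' J'' B (elt (J' ∪ J'') L (g + 1))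
      = alphaWt q I J' J'' (elt (J' ∪ J'') L g) (elt (J' ∪ J'') L (g + 1))) :
    wt q I J' J'' (L.take g ++ B :: L.drop g) = wt q I J' J'' L := by
  have hlen : (L.take g ++ B :: L.drop g).length = L.length + 1 := by
    simp [List.length_take_of_le hg]
    omega
  rw [wt, wt, hlen]
  refine prod_range_merge_adjacent hg (fun i hi => ?_) ?_ (fun i hi => ?_)
  · rw [elt_insert_of_le hg hi.le, elt_insert_of_le hg hi]
  · rw [elt_insert_of_le hg le_rfl, elt_insert_succ hg, elt_insert_of_gt hg (Nat.lt_succ_self g)]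
    exact hB
  · rw [elt_insert_of_gt hg hi, elt_insert_of_gt hg (by omega)]

end chain

section P0

variable {J : Finset ℕ} {L : List (Finset ℕ)}

lemma gapIdx_le_length (L : List (Finset ℕ)) : gapIdx L ≤ L.length := by
  have := (List.takeWhile_sublist (fun p : Finset ℕ × ℕ => decide (p.1.card = p.2 + 1))
    (l := L.zip (List.range L.length))).length_le
  simpa [gapIdx] using this

lemma elt_subset_of_mem_P0 (hL : L ∈ P0 J) (i : ℕ) : elt J L i ⊆ J := by
  unfold elt
  split_ifs
  · exact empty_subset J
  rcases lt_or_ge (i - 1) L.length with h | h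
  · rw [List.getD_eq_getElem L J h]
    exact (hL.2.2 _ (List.getElem_mem h)).2.subset
  · rw [List.getD_eq_default L J h]

lemma elt_ssubset_elt_succ_of_mem_P0 (hL : L ∈ P0 J) {i : ℕ} (hi : i ≤ L.length) :
    elt J L i ⊂ elt J L (i + 1) := by
  obtain ⟨hne, hchain, hmem⟩ := hL
  have hpos : 0 < L.length := List.length_pos_iff.mpr hne
  unfold elt
  rw [if_neg (Nat.succ_ne_zero i), Nat.add_sub_cancel]
  split_ifs with h0
  · rw [List.getD_eq_getElem L J (h0 ▸ hpos)]
    exact (hmem _ (List.getElem_mem _)).1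
  rw [List.getD_eq_getElem L J (by omega)]
  rcases hi.lt_or_eq with hlt | rfl
  · rw [List.getD_eq_getElem L J hlt]
    simpa [Nat.sub_add_cancel (Nat.pos_of_ne_zero h0)] using
      List.isChain_iff_getElem.mp hchain (i - 1) (by omega)
  · rw [List.getD_eq_default L J le_rfl]
    exact (hmem _ (List.getElem_mem _)).2

end P0

lemma List.toFinset_take_succ_sdiff {α : Type*} [DecidableEq α] {s : List α} (hs : s.Nodup)
    {i : ℕ} (hi : i < s.length) :
    (s.take (i + 1)).toFinset \ (s.take i).toFinset = {s[i]} := by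
  have hnd := hs.sublist (s.take_sublist (i + 1))
  rw [List.take_add_one, List.getElem?_eq_getElem hi, Option.toList_some] at hnd ⊢
  rw [List.toFinset_append, union_sdiff_left]
  refine Finset.sdiff_eq_self_iff_disjoint.mpr (disjoint_singleton_left.mpr ?_)
  exact fun h => (List.nodup_append.mp hnd).2.2 _ (List.mem_toFinset.mp h) _
    (List.mem_singleton_self _) rfl

section oneHat

variable {J' J'' : Finset ℕ}

lemma sortedJ_nodup (hdisj : Disjoint J' J'') : (sortedJ J' J'').Nodup := by
  refine List.Nodup.append (J''.sort_nodup _) (List.nodup_reverse.mpr (J'.sort_nodup _)) ?_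
  intro a ha ha'
  rw [Finset.mem_sort] at ha
  rw [List.mem_reverse, Finset.mem_sort] at ha'
  exact disjoint_right.mp hdisj ha ha'

lemma sortedJ_toFinset : (sortedJ J' J'').toFinset = J' ∪ J'' := by
  ext x
  simp [sortedJ, or_comm]

lemma length_oneHat : (oneHat J' J'').length = (sortedJ J' J'').length := by
  simp [oneHat, chainOf]

lemma elt_oneHat {i : ℕ} (hi : i ≤ (sortedJ J' J'').length) :
    elt (J' ∪ J'') (oneHat J' J'') i = ((sortedJ J' J'').take i).toFinset := by
  unfold elt
  split_ifs with h0
  · simp [h0]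
  rw [List.getD_eq_getElem _ _ (by rw [length_oneHat]; omega)]
  simp [oneHat, chainOf, Nat.sub_add_cancel (Nat.pos_of_ne_zero h0)]

lemma elt_oneHat_of_gt {i : ℕ} (hi : (sortedJ J' J'').length < i) :
    elt (J' ∪ J'') (oneHat J' J'') i = J' ∪ J'' := by
  rw [elt, if_neg (by omega), List.getD_eq_default _ _ (by rw [length_oneHat]; omega)]

lemma regularAt_oneHat (hdisj : Disjoint J' J'') (hJ : (J' ∪ J'').Nonempty) :
    RegularAt J' J'' (oneHat J' J'') (sortedJ J' J'').length := by
  set n := (sortedJ J' J'').length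
  have hnd := sortedJ_nodup hdisj
  have hn : 1 ≤ n := by
    rw [← sortedJ_toFinset, List.toFinset_nonempty_iff, ← List.length_pos_iff] at hJ
    exact hJ
  refine ⟨hn, length_oneHat.ge, fun i _ hi => ?_, ?_⟩
  · rw [elt_oneHat hi, List.toFinset_card_of_nodup (hnd.sublist (List.take_sublist _ _)),
      List.length_take_of_le hi]
  have hlast := List.toFinset_take_succ_sdiff hnd (i := n - 1) (by omega)
  rw [Nat.sub_add_cancel hn, List.take_length, sortedJ_toFinset] at hlast
  have hmem : (sortedJ J' J'')[n - 1] ∈ J' ∪ J'' :=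
    (mem_sdiff.mp (hlast ▸ mem_singleton_self _)).1
  rw [elt_oneHat le_rfl, elt_oneHat_of_gt (Nat.lt_succ_self n), elt_oneHat (Nat.sub_le n 1),
    List.take_length, sortedJ_toFinset, hlast, mM_singleton hmem]

lemma oneHat_empty : oneHat ∅ ∅ = [] := by
  simp [oneHat, sortedJ, chainOf]

end oneHat

section insMap

variable {k : Type*} [Field k] (q : k) (I : Finset ℕ) {J' J'' : Finset ℕ}

lemma wt_singleton (X : Finset ℕ) :
    wt q I J' J'' [X] = alphaWt q I J' J'' ∅ X * alphaWt q I J' J'' X (J' ∪ J'') := by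
  simp [wt, prod_range_succ, elt]

lemma wt_insMap_of_mem_P0 (hq : q ≠ 0) (hdisj : Disjoint J' J'')
    (hlt : ∀ a ∈ J', ∀ b ∈ J'', a < b) {L : List (Finset ℕ)} (hL : L ∈ P0 (J' ∪ J'')) :
    wt q I J' J'' (insMap J' J'' L) = wt q I J' J'' L := by
  have hL₀ : L ≠ zeroHat := by
    rintro rfl
    exact (hL.2.2 ∅ (List.mem_singleton_self ∅)).1.ne rfl
  have hg := gapIdx_le_length L
  have hstep := elt_ssubset_elt_succ_of_mem_P0 hL hg
  rw [insMap, if_neg hL₀]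
  exact wt_insert q I J' J'' hg (alphaWt_insert_mM q I hq hdisj hlt hstep.subset
    (elt_subset_of_mem_P0 hL _) (sdiff_nonempty.mpr hstep.not_subset))

lemma wt_insMap_zeroHat (hq : q ≠ 0) (hdisj : Disjoint J' J'')
    (hlt : ∀ a ∈ J', ∀ b ∈ J'', a < b) :
    wt q I J' J'' (insMap J' J'' zeroHat) = wt q I J' J'' zeroHat := by
  rw [insMap, if_pos rfl, zeroHat, wt_singleton, wt_singleton, alphaWt_of_subset q I subset_rfl,
    one_mul]
  rcases (J' ∪ J'').eq_empty_or_nonempty with hJ | hJ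
  · obtain ⟨rfl, rfl⟩ := union_eq_empty.mp hJ
    simp [alphaWt, wexp, linv]
  · simpa using alphaWt_insert_mM q I hq hdisj hlt (empty_subset _) subset_rfl (by simpa using hJ)

lemma wt_insMap_oneHat_empty : wt q I ∅ ∅ (insMap ∅ ∅ (oneHat ∅ ∅)) = wt q I ∅ ∅ (oneHat ∅ ∅) := by
  simp [oneHat_empty, insMap, zeroHat, gapIdx, wt, prod_range_succ, elt, alphaWt, wexp, linv]

end insMap

theorem stmt_13_general {k : Type*} [Field k] (q : k) (hq : q ≠ 0)
    (I J' J'' : Finset ℕ) (hdisj : Disjoint J' J'')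
    (hlt : ∀ a ∈ J', ∀ b ∈ J'', a < b) :
    (∀ π ∈ {π ∈ PP J' J'' | Irregular J' J'' π},
        wt q I J' J'' (insMap J' J'' π) = wt q I J' J'' π) ∧
    (∀ A C : Finset ℕ, A ⊆ C → C ⊆ J' ∪ J'' → (C \ A).Nonempty →
        (2 * (linv ({mM J' J'' (C \ A)} ∩ J') (C \ (A ∪ {mM J' J'' (C \ A)})) : ℤ)
          - 2 * (linv (C \ (A ∪ {mM J' J'' (C \ A)})) ({mM J' J'' (C \ A)} ∩ J'') : ℤ))
          = 0) := by
  refine ⟨?_, fun A C _ hCJ hne => linv_mM_defect_eq_zero hdisj hlt hCJ hne⟩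
  rintro π ⟨hπ | rfl | rfl, hirr⟩
  · exact wt_insMap_of_mem_P0 q I hq hdisj hlt hπ
  · exact wt_insMap_zeroHat q I hq hdisj hlt
  · rcases (J' ∪ J'').eq_empty_or_nonempty with hJ | hJ
    · obtain ⟨rfl, rfl⟩ := union_eq_empty.mp hJ
      exact wt_insMap_oneHat_empty q I
    · exact absurd (regularAt_oneHat hdisj hJ) (hirr _)

/-- The insertion bijection `℘` preserves path weights: `α(℘(π)) = α(π)` for every
irregular path `π`. Equivalently, `2ℓ({b} ∩ J', C\B) − 2ℓ(C\B, {b} ∩ J'') = 0`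
for `b = mM(C\A)` and `B = A ∪ {b}`. -/
theorem stmt_13 {k : Type*} [Field k] (q : k) (hq : q ≠ 0)
    (I J' J'' : Finset ℕ) (hdisj : Disjoint J' J'')
    (hlt : ∀ a ∈ J', ∀ b ∈ J'', a < b) (hI : Disjoint I (J' ∪ J'')) :
    (∀ π ∈ {π ∈ PP J' J'' | Irregular J' J'' π},
        wt q I J' J'' (insMap J' J'' π) = wt q I J' J'' π) ∧
    (∀ A C : Finset ℕ, A ⊆ C → C ⊆ J' ∪ J'' → (C \ A).Nonempty →
        (2 * (linv ({mM J' J'' (C \ A)} ∩ J') (C \ (A ∪ {mM J' J'' (C \ A)})) : ℤ)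
          - 2 * (linv (C \ (A ∪ {mM J' J'' (C \ A)})) ({mM J' J'' (C \ A)} ∩ J'') : ℤ))
          = 0) :=
  stmt_13_general q hq I J' J'' hdisj hlt
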